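/- arXiv:0710.0010 — 7 statements merged into one kernel-verified Lean document; each statement's English description precedes it below -/
import Mathlib

section
/- For a degree-one polynomial y(t) = a₀ + a₁ t and any T > 0 and t ≥ T, the convolution ∫₀^T (6/T³)(T - 2τ) · y(t - τ) dτ equals the derivative y'(t) = a₁. -/
/-! The kernel `τ ↦ T - 2τ` integrates to zero over `[0, T]` and has first moment `-T³/6`,
so against the linear function `τ ↦ y(t - τ) = y(t) - a₁ τ` it returns `a₁ T³ / 6`;
the factor `6 / T³` normalizes this to the slope `a₁`. -/

open intervalIntegral

theorem integral_sub_two_mul_mul_sub (T b a : ℝ) :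
    ∫ τ in (0:ℝ)..T, (T - 2 * τ) * (b - a * τ) = a * T ^ 3 / 6 := by
  have hF : ∀ x ∈ Set.uIcc 0 T, HasDerivAt
      (fun τ : ℝ => b * T * τ - (2 * b + a * T) * τ ^ 2 / 2 + 2 * a * τ ^ 3 / 3)
      ((T - 2 * x) * (b - a * x)) x := fun x _ =>
    ((((hasDerivAt_id x).const_mul (b * T)).sub
      (((hasDerivAt_pow 2 x).const_mul (2 * b + a * T)).div_const 2)).add
      (((hasDerivAt_pow 3 x).const_mul (2 * a)).div_const 3)).congr_deriv (by norm_num; ring)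
  rw [integral_eq_sub_of_hasDerivAt hF (by apply Continuous.intervalIntegrable; fun_prop)]
  ring

theorem stmt0_general (a₀ a₁ T t : ℝ) (hT : 0 < T)
    (y : ℝ → ℝ) (hy : ∀ s, y s = a₀ + a₁ * s) :
    ∫ τ in (0:ℝ)..T, (6 / T ^ 3) * (T - 2 * τ) * y (t - τ) = a₁ := by
  have hy_shift : ∀ τ, y (t - τ) = (a₀ + a₁ * t) - a₁ * τ := fun τ => by rw [hy]; ring
  simp_rw [hy_shift, mul_assoc, integral_const_mul, integral_sub_two_mul_mul_sub]
  field_simp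

theorem stmt0 (a₀ a₁ T t : ℝ) (hT : 0 < T) (ht : T ≤ t)
    (y : ℝ → ℝ) (hy : ∀ s, y s = a₀ + a₁ * s) :
    ∫ τ in (0:ℝ)..T, (6 / T ^ 3) * (T - 2 * τ) * y (t - τ) = a₁ :=
  stmt0_general a₀ a₁ T t hT y hy
end

section
/- Let W be the (N+1)×(N+1) real matrix with entries W i j = -(t₀ - t₁)^(i+j+1) / (i!·j!·(i+j+1)) (indices i, j from 0 to N), where t₀ < t₁. Then W is invertible, and its inverse V has entries V i j = (i!·j!·(i+j+1) / (t₁ - t₀)^(i+j+1)) · C(N+1+i, N-j) · C(N+1+j, N-i) · C(i+j, i)². -/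
/-!
Put `s = t₁ - t₀` and `aᵢ = (-s)ⁱ / i!`. Then `W = diag(a) · H · diag(s a)` with `H` the Hilbert
matrix `1 / (i + j + 1)`, so the claim is the classical formula for `H⁻¹`.

Let `ℓ_k` be the Lagrange basis for the nodes `0, -1, …, -N` and `M i k = ℓ_k(1 + i)`.
Interpolating `x ↦ ℓ_j(1 - x)`, which has degree `N`, at these nodes and evaluating at `1 + i` gives
`∑ₖ ℓ_k(1 + i) ℓ_j(1 + k) = ℓ_j(-i) = δᵢⱼ`, i.e. `M² = 1`. The barycentric formula writes
`M = diag(p) · H · diag(q)` with `pᵢ = (N + 1 + i)! / i!` and `q_k = (-1)ᵏ / (k! (N - k)!)`,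
hence `H⁻¹ = diag(q p) · H · diag(q p)`.
-/

open Finset Polynomial Nat Matrix

theorem Nat.factorial_mul_prod_range_add (a n : ℕ) :
    a ! * ∏ m ∈ range n, (a + 1 + m) = (a + n)! := by
  rw [← ascFactorial_eq_prod_range, factorial_mul_ascFactorial]

theorem Nat.choose_mul_choose_mul_choose_sq_mul {N i j : ℕ} (hi : i ≤ N) (hj : j ≤ N) :
    (N + 1 + i).choose (N - j) * (N + 1 + j).choose (N - i) * (i + j).choose i ^ 2 *
        ((N - i)! * (N - j)! * (i + j + 1) ^ 2 * (i ! * j !) ^ 2) =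
      (N + 1 + i)! * (N + 1 + j)! := by
  have h₁ := choose_mul_factorial_mul_factorial (by omega : N - j ≤ N + 1 + i)
  have h₂ := choose_mul_factorial_mul_factorial (by omega : N - i ≤ N + 1 + j)
  have h₃ := choose_mul_factorial_mul_factorial (Nat.le_add_right i j)
  rw [show N + 1 + i - (N - j) = i + j + 1 by omega] at h₁
  rw [show N + 1 + j - (N - i) = i + j + 1 by omega] at h₂
  rw [add_tsub_cancel_left] at h₃
  rw [← h₁, ← h₂, factorial_succ, ← h₃]
  ring

theorem Finset.prod_range_erase_natCast_sub {R : Type*} [CommRing R] {N k : ℕ} (hk : k ≤ N) :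
    ∏ m ∈ (range (N + 1)).erase k, ((m : R) - k) = (-1) ^ k * k ! * (N - k)! := by
  have hsplit : (range (N + 1)).erase k = range k ∪ Ico (k + 1) (N + 1) := by
    ext m; simp only [mem_erase, mem_range, mem_union, mem_Ico]; omega
  have hbelow : ∏ m ∈ range k, ((m : R) - k) = (-1) ^ k * k ! := by
    have : ∀ m ∈ range k, (m : R) - k = -((k - m : ℕ) : R) := fun m hm => by
      rw [Nat.cast_sub (mem_range.mp hm).le]; ring
    rw [prod_congr rfl this, prod_neg, card_range, ← descFactorial_self,
      descFactorial_eq_prod_range, Nat.cast_prod]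
  have habove : ∏ m ∈ Ico (k + 1) (N + 1), ((m : R) - k) = (N - k)! := by
    rw [prod_Ico_eq_prod_range, show N + 1 - (k + 1) = N - k by omega,
      ← prod_range_add_one_eq_factorial, Nat.cast_prod]
    exact prod_congr rfl fun m _ => by push_cast; ring
  rw [hsplit, prod_union (disjoint_left.mpr fun m h₁ h₂ => by
    simp only [mem_range, mem_Ico] at h₁ h₂; omega), hbelow, habove]

namespace Matrix

variable {n K : Type*} [Fintype n] [DecidableEq n] [Field K]

theorem diagonal_mul_diagonal_inv {p : n → K} (hp : ∀ i, p i ≠ 0) :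
    diagonal p * diagonal p⁻¹ = 1 := by
  rw [diagonal_mul_diagonal, ← diagonal_one]
  exact congrArg diagonal (funext fun i => mul_inv_cancel₀ (hp i))

theorem diagonal_inv_mul_diagonal {p : n → K} (hp : ∀ i, p i ≠ 0) :
    diagonal p⁻¹ * diagonal p = 1 := by
  rw [diagonal_mul_diagonal, ← diagonal_one]
  exact congrArg diagonal (funext fun i => inv_mul_cancel₀ (hp i))

theorem diagonal_mul_mul_diagonal_mul_inv_eq_one {A B : Matrix n n K} {p q : n → K}
    (hp : ∀ i, p i ≠ 0) (hq : ∀ i, q i ≠ 0) (hAB : A * B = 1) :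
    (diagonal p * A * diagonal q) * (diagonal q⁻¹ * B * diagonal p⁻¹) = 1 := by
  calc (diagonal p * A * diagonal q) * (diagonal q⁻¹ * B * diagonal p⁻¹)
      = diagonal p * A * (diagonal q * diagonal q⁻¹) * B * diagonal p⁻¹ := by
        simp only [Matrix.mul_assoc]
    _ = 1 := by
        rw [diagonal_mul_diagonal_inv hq, Matrix.mul_one, Matrix.mul_assoc (diagonal p), hAB,
          Matrix.mul_one, diagonal_mul_diagonal_inv hp]

theorem mul_eq_one_of_diagonal_mul_mul_diagonal_sq {A : Matrix n n K} {p q : n → K}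
    (hp : ∀ i, p i ≠ 0) (h : (diagonal p * A * diagonal q) * (diagonal p * A * diagonal q) = 1) :
    A * (diagonal (q * p) * A * diagonal (q * p)) = 1 := by
  calc A * (diagonal (q * p) * A * diagonal (q * p))
      = diagonal p⁻¹ * ((diagonal p * A * diagonal q) * (diagonal p * A * diagonal q)) *
          diagonal p := by
        rw [show diagonal (q * p) = diagonal q * diagonal p from (diagonal_mul_diagonal q p).symm]
        simp only [Matrix.mul_assoc]
        rw [← Matrix.mul_assoc (diagonal p⁻¹), diagonal_inv_mul_diagonal hp, Matrix.one_mul]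
    _ = 1 := by rw [h, Matrix.mul_one, diagonal_inv_mul_diagonal hp]

end Matrix

theorem Lagrange.eval_eq_sum_eval_mul_eval_basis {F ι : Type*} [Field F] [DecidableEq ι]
    {s : Finset ι} {v : ι → F} {f : F[X]} (hvs : Set.InjOn v s) (hf : f.degree < #s) (x : F) :
    f.eval x = ∑ i ∈ s, f.eval (v i) * (Lagrange.basis s v i).eval x := by
  conv_lhs => rw [Lagrange.eq_interpolate hvs hf]
  simp only [Lagrange.interpolate_apply, eval_finsetSum, eval_mul, eval_C]

noncomputable def negNatLagrangeBasis (K : Type*) [Field K] (N k : ℕ) : K[X] :=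
  Lagrange.basis (range (N + 1)) (fun m : ℕ => -(m : K)) k

def hilbertMatrix (K : Type*) [DivisionRing K] (n : ℕ) : Matrix (Fin n) (Fin n) K :=
  of fun i j => ((i : ℕ) + (j : ℕ) + 1 : K)⁻¹

def hilbertMatrixInv (K : Type*) [Ring K] (N : ℕ) : Matrix (Fin (N + 1)) (Fin (N + 1)) K :=
  of fun i j => (-1) ^ ((i : ℕ) + (j : ℕ)) * ((i : ℕ) + (j : ℕ) + 1 : K) *
    (N + 1 + i).choose (N - j) * (N + 1 + j).choose (N - i) * ((i : ℕ) + (j : ℕ)).choose i ^ 2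

section Hilbert

variable {K : Type*} [Field K] [CharZero K]

theorem injOn_neg_natCast (n : ℕ) : Set.InjOn (fun m : ℕ => -(m : K)) (range n) :=
  fun a _ b _ h => by simpa using h

theorem sum_eval_negNatLagrangeBasis_mul {N i j : ℕ} (hi : i ≤ N) (hj : j ≤ N) :
    ∑ k ∈ range (N + 1), (negNatLagrangeBasis K N k).eval (1 + (i : K)) *
        (negNatLagrangeBasis K N j).eval (1 + (k : K)) = if i = j then 1 else 0 := by
  have hi' : i ∈ range (N + 1) := mem_range.mpr (Nat.lt_succ_of_le hi)
  have hj' : j ∈ range (N + 1) := mem_range.mpr (Nat.lt_succ_of_le hj)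
  have hdeg : ((negNatLagrangeBasis K N j).comp (1 - X)).degree < #(range (N + 1)) := by
    have h1 : ((1 : K[X]) - X).degree = 1 := by compute_degree!
    rw [negNatLagrangeBasis, degree_comp, h1, Lagrange.degree_basis (injOn_neg_natCast _) hj',
      card_range, mul_one]
    · exact_mod_cast Nat.sub_lt N.succ_pos one_pos
    · rw [h1]; exact zero_lt_one
  have hinterp := Lagrange.eval_eq_sum_eval_mul_eval_basis (injOn_neg_natCast (N + 1)) hdeg (1 + i)
  simp only [eval_comp, eval_sub, eval_one, eval_X, sub_neg_eq_add, sub_add_cancel_left]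
    at hinterp
  trans (negNatLagrangeBasis K N j).eval (-(i : K))
  · rw [hinterp]; exact sum_congr rfl fun k _ => mul_comm _ _
  · split_ifs with hij
    · subst hij; exact Lagrange.eval_basis_self (injOn_neg_natCast _) hi'
    · exact Lagrange.eval_basis_of_ne (v := fun m : ℕ => -(m : K)) (Ne.symm hij) hi'

theorem eval_negNatLagrangeBasis_one_add {N k : ℕ} (hk : k ≤ N) (i : ℕ) :
    (negNatLagrangeBasis K N k).eval (1 + (i : K)) =
      ((N + 1 + i)! / i ! : K) * ((i : K) + k + 1)⁻¹ * ((-1) ^ k / (k ! * (N - k)!) : K) := by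
  have hnode : 1 + (i : K) ≠ -(k : K) := by
    rw [Ne, ← sub_eq_zero, sub_neg_eq_add]; norm_cast; omega
  have hnodal : ∏ m ∈ range (N + 1), (1 + (i : K) - -(m : K)) = (N + 1 + i)! / i ! := by
    rw [eq_div_iff (Nat.cast_ne_zero.mpr (factorial_ne_zero i)), mul_comm,
      show N + 1 + i = i + (N + 1) by omega, ← Nat.factorial_mul_prod_range_add, Nat.cast_mul,
      Nat.cast_prod]
    exact congrArg _ (prod_congr rfl fun m _ => by push_cast; ring)
  have hweight : ∏ m ∈ (range (N + 1)).erase k, (-(k : K) - -(m : K))⁻¹ =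
      (-1) ^ k / (k ! * (N - k)! : K) := by
    rw [prod_inv_distrib, prod_congr rfl fun (m : ℕ) _ => show -(k : K) - -(m : K) = m - k by ring,
      prod_range_erase_natCast_sub hk, mul_assoc, mul_inv, ← inv_pow, inv_neg_one, div_eq_mul_inv]
  rw [negNatLagrangeBasis, Lagrange.eval_basis_not_at_node (mem_range.mpr (Nat.lt_succ_of_le hk))
    hnode, Lagrange.eval_nodal, Lagrange.nodalWeight, hnodal, hweight, sub_neg_eq_add]
  ring

theorem neg_one_pow_mul_choose_mul_choose_mul_choose_sq {N i j : ℕ} (hi : i ≤ N) (hj : j ≤ N) :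
    (-1) ^ (i + j) * ((i : K) + j + 1) * (N + 1 + i).choose (N - j) *
        (N + 1 + j).choose (N - i) * (i + j).choose i ^ 2 =
      (-1) ^ i / (i ! * (N - i)! : K) * ((N + 1 + i)! / i ! : K) * ((i : K) + j + 1)⁻¹ *
        ((-1) ^ j / (j ! * (N - j)! : K) * ((N + 1 + j)! / j ! : K)) := by
  have h := congrArg (Nat.cast : ℕ → K) (Nat.choose_mul_choose_mul_choose_sq_mul hi hj)
  push_cast at h
  have hij : (i : K) + j + 1 ≠ 0 := by norm_cast
  have hi! : (i ! : K) ≠ 0 := by norm_cast; positivity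
  have hj! : (j ! : K) ≠ 0 := by norm_cast; positivity
  have hNi! : ((N - i)! : K) ≠ 0 := by norm_cast; positivity
  have hNj! : ((N - j)! : K) ≠ 0 := by norm_cast; positivity
  field_simp
  linear_combination (-1) ^ (i + j) * h

theorem hilbertMatrix_mul_hilbertMatrixInv (N : ℕ) :
    hilbertMatrix K (N + 1) * hilbertMatrixInv K N = 1 := by
  set M : Matrix (Fin (N + 1)) (Fin (N + 1)) K :=
    of fun i k => (negNatLagrangeBasis K N k).eval (1 + ((i : ℕ) : K))
  have hM : M * M = 1 := by
    ext i j
    simp only [mul_apply, one_apply, M, of_apply]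
    rw [Fin.sum_univ_eq_sum_range
      (fun k => (negNatLagrangeBasis K N k).eval (1 + ((i : ℕ) : K)) *
        (negNatLagrangeBasis K N j).eval (1 + (k : K))) (N + 1),
      sum_eval_negNatLagrangeBasis_mul (Fin.is_le i) (Fin.is_le j)]
    simp only [Fin.val_inj]
  set p : Fin (N + 1) → K := fun i => (N + 1 + i)! / (i : ℕ)!
  set q : Fin (N + 1) → K := fun k => (-1) ^ (k : ℕ) / ((k : ℕ)! * (N - k)!)
  have hp : ∀ i, p i ≠ 0 := fun i =>
    div_ne_zero (by norm_cast; positivity) (by norm_cast; positivity)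
  have hMpq : M = diagonal p * hilbertMatrix K (N + 1) * diagonal q := by
    ext i k
    simp only [M, p, q, of_apply, diagonal_mul, mul_diagonal, hilbertMatrix,
      eval_negNatLagrangeBasis_one_add (Fin.is_le k)]
  convert mul_eq_one_of_diagonal_mul_mul_diagonal_sq hp (hMpq ▸ hM) using 2
  ext i j
  simp only [hilbertMatrixInv, hilbertMatrix, p, q, of_apply, diagonal_mul, mul_diagonal,
    Pi.mul_apply]
  exact neg_one_pow_mul_choose_mul_choose_mul_choose_sq (Fin.is_le i) (Fin.is_le j)

end Hilbert

theorem stmt6 (N : ℕ) (t₀ t₁ : ℝ) (h : t₀ < t₁)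
    (W : Matrix (Fin (N + 1)) (Fin (N + 1)) ℝ)
    (hW : ∀ i j : Fin (N + 1), W i j =
      -(t₀ - t₁) ^ ((i : ℕ) + (j : ℕ) + 1) /
        ((i : ℕ).factorial * (j : ℕ).factorial * ((i : ℕ) + (j : ℕ) + 1))) :
    IsUnit W.det ∧
      ∀ i j : Fin (N + 1), W⁻¹ i j =
        ((i : ℕ).factorial * (j : ℕ).factorial * ((i : ℕ) + (j : ℕ) + 1) /
            (t₁ - t₀) ^ ((i : ℕ) + (j : ℕ) + 1)) *
          (Nat.choose (N + 1 + i) (N - j)) * (Nat.choose (N + 1 + j) (N - i)) *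
          (Nat.choose ((i : ℕ) + (j : ℕ)) i) ^ 2 := by
  set s := t₁ - t₀
  have hs : s ≠ 0 := (sub_pos.mpr h).ne'
  set a : Fin (N + 1) → ℝ := fun i => (-s) ^ (i : ℕ) / (i : ℕ)!
  have ha : ∀ i, a i ≠ 0 := fun i =>
    div_ne_zero (pow_ne_zero _ (neg_ne_zero.mpr hs)) (by positivity)
  have hsa : ∀ i, (s • a) i ≠ 0 := fun i => mul_ne_zero hs (ha i)
  have hWeq : W = diagonal a * hilbertMatrix ℝ (N + 1) * diagonal (s • a) := by
    ext i j
    simp only [hW, diagonal_mul, mul_diagonal, hilbertMatrix, of_apply, a, Pi.smul_apply,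
      smul_eq_mul, show t₀ - t₁ = -s by ring]
    field_simp
    ring
  have hWV := diagonal_mul_mul_diagonal_mul_inv_eq_one ha hsa (hilbertMatrix_mul_hilbertMatrixInv N)
  rw [← hWeq] at hWV
  refine ⟨isUnit_det_of_right_inverse hWV, fun i j => ?_⟩
  simp only [inv_eq_right_inv hWV, diagonal_mul, mul_diagonal, hilbertMatrixInv, of_apply, a,
    Pi.inv_apply, Pi.smul_apply, smul_eq_mul, neg_pow s, pow_add]
  field_simp
end

section
/- Let y(t) = Σ_{i=0}^{N} (aᵢ/i!)·tⁱ. For T > 0, t ≥ T, and 0 ≤ j ≤ N, the convolution ∫₀^T H_j(T,τ)·y(t-τ) dτ equals y^{(j)}(t), where H_j(T,τ) = ((N+j+1)!·(N+1)!/T^{N+j+1}) · Σ_{κ₁=0}^{N-j} Σ_{κ₂=0}^{j} (T-τ)^{κ₁+κ₂}·(-τ)^{N-κ₁-κ₂} / (κ₁!·κ₂!·(N-j-κ₁)!·(j-κ₂)!·(N-κ₁-κ₂)!·(κ₁+κ₂)!·(N-κ₁+1)). -/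
/-!
The kernel `H_j(T, ·)` (`derivKernel N j T`) is a polynomial of degree `N` whose moments are
`∫₀ᵀ H_j(T, τ) τ^m dτ = (-1)^j j! δ_{mj}` for `m ≤ N`. Since `y` is a polynomial of degree
`≤ N`, Taylor's formula `y(t - τ) = ∑_{m ≤ N} y^{(m)}(t)/m! · (-τ)^m` is exact, so the
convolution picks out `y^{(j)}(t)`. By the Beta integral
`∫₀ᵀ (T - τ)^a τ^b dτ = a! b!/(a + b + 1)! · T^{a+b+1}` the moments become an alternating double
binomial sum; its inner sum is a `j`-th forward difference of `x ↦ (x choose m)`, and what remains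
is again a Beta integral (for `m = j`) or another vanishing forward difference (for `m > j`).
-/

open Finset Nat Polynomial

theorem integral_sub_pow_mul_pow (T : ℝ) (a b : ℕ) :
    ∫ τ in (0:ℝ)..T, (T - τ) ^ a * τ ^ b = a ! * b ! / (a + b + 1)! * T ^ (a + b + 1) := by
  induction a generalizing b with
  | zero =>
    simp [integral_pow, Nat.factorial_succ]
    field_simp
  | succ a ih =>
    have hparts := intervalIntegral.integral_mul_deriv_eq_deriv_mul (a := 0) (b := T)
      (u := fun τ : ℝ => (T - τ) ^ (a + 1)) (u' := fun τ => -((a + 1 : ℕ) * (T - τ) ^ a))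
      (v := fun τ : ℝ => τ ^ (b + 1) / (b + 1)) (v' := fun τ => τ ^ b)
      (fun τ _ => by
        convert ((hasDerivAt_id' τ).const_sub T).fun_pow (a + 1) using 1
        push_cast; ring)
      (fun τ _ => by
        convert (hasDerivAt_pow (b + 1) τ).div_const ((b:ℝ) + 1) using 1
        push_cast; field_simp)
      (by apply Continuous.intervalIntegrable; fun_prop)
      (by apply Continuous.intervalIntegrable; fun_prop)
    have hswap : ∫ τ in (0:ℝ)..T, -((a + 1 : ℕ) * (T - τ) ^ a) * (τ ^ (b + 1) / (b + 1))
        = -((a + 1 : ℕ) / (b + 1) * ∫ τ in (0:ℝ)..T, (T - τ) ^ a * τ ^ (b + 1)) := by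
      rw [← intervalIntegral.integral_const_mul, ← intervalIntegral.integral_neg]
      congr 1 with τ
      ring
    rw [hparts, hswap, ih]
    simp only [sub_self, zero_pow (Nat.succ_ne_zero _), zero_mul, zero_div, mul_zero, sub_zero]
    rw [show a + (b + 1) + 1 = a + 1 + b + 1 by ring, Nat.factorial_succ a, Nat.factorial_succ b]
    push_cast
    field_simp
    ring

theorem sum_range_neg_one_pow_mul_choose_div (K j : ℕ) :
    ∑ p ∈ range (K + 1), (-1 : ℝ) ^ p * K.choose p / (j + p + 1) = K ! * j ! / (K + j + 1)! := by
  have hexpand : ∀ u : ℝ,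
      (1 - u) ^ K * u ^ j = ∑ p ∈ range (K + 1), (-1) ^ p * K.choose p * u ^ (p + j) := by
    intro u
    rw [sub_eq_neg_add, add_pow, sum_mul]
    refine sum_congr rfl fun p _ => ?_
    rw [neg_pow, pow_add]
    ring
  have h := integral_sub_pow_mul_pow 1 K j
  simp only [hexpand, one_pow, mul_one] at h
  rw [← h, intervalIntegral.integral_finsetSum (fun p _ => by
    apply Continuous.intervalIntegrable; fun_prop)]
  refine sum_congr rfl fun p _ => ?_
  rw [intervalIntegral.integral_const_mul, integral_pow]
  push_cast
  field_simp
  ring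

theorem sum_range_neg_one_pow_mul_choose_mul_choose (n y m : ℕ) :
    ∑ k ∈ range (n + 1), (-1 : ℤ) ^ k * n.choose k * (y + k).choose m =
      if n ≤ m then (-1 : ℤ) ^ n * y.choose (m - n) else 0 := by
  have hsum : ∑ k ∈ range (n + 1), (-1 : ℤ) ^ k * n.choose k * (y + k).choose m =
      (-1) ^ n * (fwdDiff 1)^[n] (fun x : ℕ => (x.choose m : ℤ)) y := by
    rw [fwdDiff_iter_eq_sum_shift, mul_sum]
    refine sum_congr rfl fun k hk => ?_
    have hkn : k ≤ n := Nat.lt_succ_iff.mp (mem_range.mp hk)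
    rw [smul_eq_mul, smul_eq_mul, mul_one, ← mul_assoc, ← mul_assoc, ← pow_add,
      show n + (n - k) = k + 2 * (n - k) by omega, pow_add, pow_mul]
    simp
  rw [hsum]
  split_ifs with hnm
  · obtain ⟨d, rfl⟩ := Nat.exists_eq_add_of_le hnm
    rw [fwdDiff_iter_choose, Nat.add_sub_cancel_left]
  · obtain ⟨d, rfl⟩ := Nat.exists_eq_add_of_lt (not_le.mp hnm)
    rw [show m + d + 1 = d + 1 + m by ring, Function.iterate_add_apply,
      show (fun x : ℕ => (x.choose m : ℤ)) = fun x => x.choose (m + 0) from rfl,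
      fwdDiff_iter_choose, Function.iterate_succ_apply]
    simp [Function.iterate_fixed]

theorem sum_sum_neg_one_pow_mul_choose_div (K j m : ℕ) (hm : m ≤ K + j) :
    ∑ p ∈ range (K + 1), ∑ q ∈ range (j + 1),
        (-1 : ℝ) ^ (p + q) * K.choose p * j.choose q * (p + q + m).choose m / (j + p + 1) =
      if m = j then (-1 : ℝ) ^ j * K ! * j ! / (K + j + 1)! else 0 := by
  have hinner : ∀ p, ∑ q ∈ range (j + 1),
      (-1 : ℝ) ^ (p + q) * K.choose p * j.choose q * (p + q + m).choose m / (j + p + 1) =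
        (-1) ^ p * K.choose p / (j + p + 1) *
          if j ≤ m then (-1) ^ j * ((p + m).choose (m - j) : ℝ) else 0 := by
    intro p
    have h := congrArg (Int.cast : ℤ → ℝ) (sum_range_neg_one_pow_mul_choose_mul_choose j (p + m) m)
    push_cast [apply_ite (Int.cast : ℤ → ℝ)] at h
    rw [← h, mul_sum]
    refine sum_congr rfl fun q _ => ?_
    rw [show p + q + m = p + m + q by ring]
    ring
  simp_rw [hinner]
  rcases lt_trichotomy m j with hlt | rfl | hgt
  · simp [hlt.not_ge, hlt.ne]
  · simp only [le_refl, if_true, Nat.sub_self, choose_zero_right, cast_one, mul_one]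
    rw [← sum_mul, sum_range_neg_one_pow_mul_choose_div]
    ring
  · obtain ⟨d, rfl⟩ := Nat.exists_eq_add_of_lt hgt
    have habsorb : ∀ p : ℕ, ((p + (j + d + 1)).choose (j + d + 1 - j) : ℝ) / (j + p + 1) =
        (j + d + 1 + p).choose d / (d + 1) := by
      intro p
      have h := Nat.choose_succ_right_eq (p + (j + d + 1)) d
      rw [show p + (j + d + 1) - d = j + p + 1 by omega] at h
      rw [show j + d + 1 - j = d + 1 by omega, show j + d + 1 + p = p + (j + d + 1) by ring,
        div_eq_div_iff (by positivity) (by positivity)]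
      exact_mod_cast h
    have h := congrArg (Int.cast : ℤ → ℝ)
      (sum_range_neg_one_pow_mul_choose_mul_choose K (j + d + 1) d)
    push_cast [apply_ite (Int.cast : ℤ → ℝ), if_neg (show ¬K ≤ d by omega)] at h
    rw [if_neg (by omega)]
    calc _ = (-1) ^ j / (d + 1) * ∑ p ∈ range (K + 1),
          (-1 : ℝ) ^ p * K.choose p * (j + d + 1 + p).choose d := by
          rw [mul_sum]
          refine sum_congr rfl fun p _ => ?_
          rw [if_pos (by omega)]
          trans (-1) ^ p * K.choose p * (-1) ^ j *
            (((p + (j + d + 1)).choose (j + d + 1 - j) : ℝ) / (j + p + 1))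
          · ring
          rw [habsorb]
          ring
      _ = 0 := by rw [h, mul_zero]

noncomputable def derivKernel (N j : ℕ) (T τ : ℝ) : ℝ :=
  (N + j + 1)! * (N + 1)! / T ^ (N + j + 1) *
    ∑ κ₁ ∈ range (N - j + 1), ∑ κ₂ ∈ range (j + 1),
      (T - τ) ^ (κ₁ + κ₂) * (-τ) ^ (N - κ₁ - κ₂) /
        (κ₁ ! * κ₂ ! * (N - j - κ₁)! * (j - κ₂)! * (N - κ₁ - κ₂)! * (κ₁ + κ₂)! * (N - κ₁ + 1))

theorem integral_sub_pow_mul_neg_pow_mul_pow (T : ℝ) (a b m : ℕ) :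
    ∫ τ in (0:ℝ)..T, (T - τ) ^ a * (-τ) ^ b * τ ^ m =
      (-1) ^ b * (a ! * (b + m)! / (a + b + m + 1)! * T ^ (a + b + m + 1)) := by
  have h : ∀ τ : ℝ, (T - τ) ^ a * (-τ) ^ b * τ ^ m = (-1) ^ b * ((T - τ) ^ a * τ ^ (b + m)) := by
    intro τ
    rw [neg_pow, pow_add]
    ring
  simp_rw [h]
  rw [intervalIntegral.integral_const_mul, integral_sub_pow_mul_pow, ← add_assoc]

theorem integral_derivKernel_mul_pow {N j m : ℕ} (hj : j ≤ N) (hm : m ≤ N) {T : ℝ}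
    (hT : T ≠ 0) :
    ∫ τ in (0:ℝ)..T, derivKernel N j T τ * τ ^ m = if m = j then (-1 : ℝ) ^ j * j ! else 0 := by
  obtain ⟨K, rfl⟩ := Nat.exists_eq_add_of_le' hj
  set A : ℝ := (K + j + j + 1)! * (K + j + 1)! / T ^ (K + j + j + 1)
  set D : ℕ → ℕ → ℝ := fun κ₁ κ₂ => κ₁ ! * κ₂ ! * (K + j - j - κ₁)! * (j - κ₂)! *
    (K + j - κ₁ - κ₂)! * (κ₁ + κ₂)! * (((K + j : ℕ) : ℝ) - κ₁ + 1)
  calc ∫ τ in (0:ℝ)..T, derivKernel (K + j) j T τ * τ ^ m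
      = A * ∑ κ₁ ∈ range (K + j - j + 1), ∑ κ₂ ∈ range (j + 1),
          (∫ τ in (0:ℝ)..T, (T - τ) ^ (κ₁ + κ₂) * (-τ) ^ (K + j - κ₁ - κ₂) * τ ^ m) / D κ₁ κ₂ := by
        simp_rw [derivKernel, mul_assoc, intervalIntegral.integral_const_mul, sum_mul]
        rw [intervalIntegral.integral_finsetSum (fun _ _ => by
          apply Continuous.intervalIntegrable; fun_prop)]
        refine congrArg (A * ·) (sum_congr rfl fun κ₁ _ => ?_)
        rw [intervalIntegral.integral_finsetSum (fun _ _ => by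
          apply Continuous.intervalIntegrable; fun_prop)]
        refine sum_congr rfl fun κ₂ _ => ?_
        rw [← intervalIntegral.integral_div]
        congr 1 with τ
        ring
    _ = A * m ! * T ^ (K + j + m + 1) / ((K + j + m + 1)! * K ! * j !) *
          ∑ p ∈ range (K + 1), ∑ q ∈ range (j + 1),
            (-1 : ℝ) ^ (p + q) * K.choose p * j.choose q * (p + q + m).choose m / (j + p + 1) := by
        rw [Nat.add_sub_cancel]
        simp_rw [mul_sum]
        -- reindex by `p = K - κ₁`, `q = j - κ₂`
        refine (sum_range_reflect _ _).symm.trans (sum_congr rfl fun p hp => ?_)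
        refine (sum_range_reflect _ _).symm.trans (sum_congr rfl fun q hq => ?_)
        have hpK : p ≤ K := by simpa [Nat.lt_succ_iff] using hp
        have hqj : q ≤ j := by simpa [Nat.lt_succ_iff] using hq
        rw [integral_sub_pow_mul_neg_pow_mul_pow]
        simp only [D, show K + 1 - 1 - p = K - p by omega, show j + 1 - 1 - q = j - q by omega,
          show K + j - j - (K - p) = p by omega, show j - (j - q) = q by omega,
          show K + j - (K - p) - (j - q) = p + q by omega,
          show K - p + (j - q) + (p + q) + m + 1 = K + j + m + 1 by omega,
          Nat.cast_sub hpK, Nat.cast_add]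
        rw [Nat.cast_choose ℝ hpK, Nat.cast_choose ℝ hqj,
          Nat.cast_choose ℝ (Nat.le_add_left m (p + q)), Nat.add_sub_cancel,
          show (K : ℝ) + j - (K - p) + 1 = j + p + 1 by ring]
        field_simp
    _ = if m = j then (-1 : ℝ) ^ j * j ! else 0 := by
        rw [sum_sum_neg_one_pow_mul_choose_div K j m hm]
        split_ifs with hmj
        · subst hmj
          simp only [A]
          field_simp
        · rw [mul_zero]

theorem Polynomial.iteratedDeriv_eval {𝕜 : Type*} [NontriviallyNormedField 𝕜] (P : 𝕜[X])
    (n : ℕ) : iteratedDeriv n (fun x => P.eval x) = fun x => (derivative^[n] P).eval x := by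
  induction n generalizing P with
  | zero => simp
  | succ n ih =>
    have hderiv : deriv (fun x => P.eval x) = fun x => P.derivative.eval x := by
      ext
      exact P.deriv
    rw [iteratedDeriv_succ', hderiv, ih, Function.iterate_succ_apply]

theorem Polynomial.eval_add_eq_sum_hasseDeriv {R : Type*} [CommSemiring R] {P : R[X]} {N : ℕ}
    (hP : P.natDegree ≤ N) (t h : R) :
    P.eval (t + h) = ∑ k ∈ range (N + 1), (hasseDeriv k P).eval t * h ^ k := by
  rw [add_comm, ← taylor_eval,
    eval_eq_sum_range' (n := N + 1) (by rwa [natDegree_taylor, Nat.lt_succ_iff])]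
  simp_rw [taylor_coeff]

theorem integral_derivKernel_mul_eval_sub {N j : ℕ} (hj : j ≤ N) {T : ℝ} (hT : T ≠ 0)
    {P : ℝ[X]} (hP : P.natDegree ≤ N) (t : ℝ) :
    ∫ τ in (0:ℝ)..T, derivKernel N j T τ * P.eval (t - τ) = (derivative^[j] P).eval t := by
  simp_rw [sub_eq_add_neg t, eval_add_eq_sum_hasseDeriv hP, mul_sum]
  rw [intervalIntegral.integral_finsetSum (fun _ _ => by
    apply Continuous.intervalIntegrable; unfold derivKernel; fun_prop)]
  calc ∑ k ∈ range (N + 1), ∫ τ in (0:ℝ)..T,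
        derivKernel N j T τ * ((hasseDeriv k P).eval t * (-τ) ^ k)
      = ∑ k ∈ range (N + 1), (-1) ^ k * (hasseDeriv k P).eval t *
          ∫ τ in (0:ℝ)..T, derivKernel N j T τ * τ ^ k := by
        refine sum_congr rfl fun k _ => ?_
        rw [← intervalIntegral.integral_const_mul]
        congr 1 with τ
        rw [neg_pow]
        ring
    _ = ∑ k ∈ range (N + 1), (-1) ^ k * (hasseDeriv k P).eval t *
          if k = j then (-1 : ℝ) ^ j * j ! else 0 := by
        refine sum_congr rfl fun k hk => ?_
        rw [integral_derivKernel_mul_pow hj (Nat.lt_succ_iff.mp (mem_range.mp hk)) hT]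
    _ = (derivative^[j] P).eval t := by
        simp only [mul_ite, mul_zero, sum_ite_eq', mem_range, Nat.lt_succ_iff.mpr hj, if_true]
        have hsign : (-1 : ℝ) ^ j * (-1) ^ j = 1 := by rw [← mul_pow]; simp
        rw [← factorial_smul_hasseDeriv, LinearMap.smul_apply, eval_smul, nsmul_eq_mul]
        linear_combination ((hasseDeriv j P).eval t * j !) * hsign

theorem stmt10_general (N : ℕ) (a : Fin (N + 1) → ℝ) (y : ℝ → ℝ)
    (hy : ∀ s, y s = ∑ i : Fin (N + 1), a i / (i : ℕ).factorial * s ^ (i : ℕ))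
    (j : ℕ) (hj : j ≤ N) (T t : ℝ) (hT : 0 < T) :
    ∫ τ in (0:ℝ)..T,
        (((N + j + 1).factorial : ℝ) * ((N + 1).factorial : ℝ) / T ^ (N + j + 1)) *
          (∑ κ₁ ∈ Finset.range (N - j + 1), ∑ κ₂ ∈ Finset.range (j + 1),
            (T - τ) ^ (κ₁ + κ₂) * (-τ) ^ (N - κ₁ - κ₂) /
              ((κ₁.factorial : ℝ) * κ₂.factorial * (N - j - κ₁).factorial *
                (j - κ₂).factorial * (N - κ₁ - κ₂).factorial * (κ₁ + κ₂).factorial *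
                (N - κ₁ + 1))) * y (t - τ) =
      iteratedDeriv j y t := by
  set P : ℝ[X] := ∑ i : Fin (N + 1), C (a i / (i : ℕ)!) * X ^ (i : ℕ)
  have hyP : y = fun s => P.eval s := funext fun s => by simp [P, hy, eval_finsetSum]
  have hP : P.natDegree ≤ N := natDegree_sum_le_of_forall_le _ _ fun i _ =>
    (natDegree_C_mul_X_pow_le _ _).trans (Nat.lt_succ_iff.mp i.isLt)
  subst hyP
  rw [Polynomial.iteratedDeriv_eval]
  exact integral_derivKernel_mul_eval_sub hj hT.ne' hP t

theorem stmt10 (N : ℕ) (a : Fin (N + 1) → ℝ) (y : ℝ → ℝ)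
    (hy : ∀ s, y s = ∑ i : Fin (N + 1), a i / (i : ℕ).factorial * s ^ (i : ℕ))
    (j : ℕ) (hj : j ≤ N) (T t : ℝ) (hT : 0 < T) (ht : T ≤ t) :
    ∫ τ in (0:ℝ)..T,
        (((N + j + 1).factorial : ℝ) * ((N + 1).factorial : ℝ) / T ^ (N + j + 1)) *
          (∑ κ₁ ∈ Finset.range (N - j + 1), ∑ κ₂ ∈ Finset.range (j + 1),
            (T - τ) ^ (κ₁ + κ₂) * (-τ) ^ (N - κ₁ - κ₂) /
              ((κ₁.factorial : ℝ) * κ₂.factorial * (N - j - κ₁).factorial *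
                (j - κ₂).factorial * (N - κ₁ - κ₂).factorial * (κ₁ + κ₂).factorial *
                (N - κ₁ + 1))) * y (t - τ) =
      iteratedDeriv j y t :=
  stmt10_general N a y hy j hj T t hT
end

section
/- For T > 0 and all τ ∈ ℝ and 0 ≤ j ≤ N, the two kernels coincide: H_j(T,τ) = G_j(T,τ), where H_j(T,τ) = ((N+j+1)!·(N+1)!/T^{N+j+1})·Σ_{κ₁=0}^{N-j}Σ_{κ₂=0}^{j} (T-τ)^{κ₁+κ₂}·(-τ)^{N-κ₁-κ₂}/(κ₁!·κ₂!·(N-j-κ₁)!·(j-κ₂)!·(N-κ₁-κ₂)!·(κ₁+κ₂)!·(N-κ₁+1)) and G_j(T,τ) = ((N+j+1)!/(T^{j+1}·j!·(N-j)!))·Σ_{k=0}^{N} ((-1)^k·(N+k+1)!/((j+k+1)·(N-k)!·(k!)²))·(τ/T)^k. -/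
/-!
Expanding `(T - τ)^(κ₁+κ₂)` binomially, the coefficient of `T^(N-k) (-τ)^k` in the double
sum becomes, once the factorials are regrouped into binomial coefficients,
`∑ κ₁ κ₂, C(N-j, κ₁) C(j, κ₂) C(k, N-κ₁-κ₂) / (N-κ₁+1)` up to a factorial prefactor.
Vandermonde's identity sums out `κ₂`, leaving `C(j+k, N-κ₁)`; the absorption identity
`C(j+k, N-κ₁) / (N-κ₁+1) = C(j+k+1, N-κ₁+1) / (j+k+1)` then lets Vandermonde sum out
`κ₁`, giving `C(N+k+1, N+1) / (j+k+1)`, which is the coefficient of `(-τ/T)^k` in `G_j`.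
-/

open Finset Nat

theorem add_pow_mul_pow_eq_sum_range {R : Type*} [CommSemiring R] (x y : R) {s N : ℕ}
    (hs : s ≤ N) :
    (x + y) ^ s * y ^ (N - s) =
      ∑ k ∈ range (N + 1), (s.choose (N - k) : R) * x ^ (N - k) * y ^ k := by
  calc (x + y) ^ s * y ^ (N - s)
      = ∑ i ∈ range (s + 1), (s.choose i : R) * x ^ i * y ^ (N - i) := by
        rw [add_pow, sum_mul]
        refine sum_congr rfl fun i hi => ?_
        rw [show N - i = (s - i) + (N - s) by grind, pow_add]
        ring
    _ = ∑ i ∈ range (N + 1), (s.choose i : R) * x ^ i * y ^ (N - i) := by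
        refine sum_subset (range_subset_range.2 (by omega)) fun i _ hi => ?_
        rw [choose_eq_zero_of_lt (by simpa using hi), cast_zero, zero_mul, zero_mul]
    _ = _ := by
        rw [← sum_range_reflect]
        refine sum_congr rfl fun k hk => ?_
        rw [add_tsub_cancel_right, Nat.sub_sub_self (by simpa [Nat.lt_succ_iff] using hk)]

theorem sum_range_choose_mul_choose_sub {p m : ℕ} (q : ℕ) (hpm : p ≤ m) :
    ∑ i ∈ range (p + 1), p.choose i * q.choose (m - i) = (p + q).choose m := by
  rw [add_choose_eq, Nat.sum_antidiagonal_eq_sum_range_succ_mk]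
  refine sum_subset (range_subset_range.2 (by omega)) fun i _ hi => ?_
  rw [choose_eq_zero_of_lt (by simpa using hi), zero_mul]

theorem choose_sub_mul_factorial_mul_factorial_comm {s k N : ℕ} (hs : s ≤ N) (hk : k ≤ N) :
    s.choose (N - k) * k ! * (N - k)! = k.choose (N - s) * s ! * (N - s)! := by
  by_cases h : N - k ≤ s
  · -- both sides equal `s! k! / (s + k - N)!`
    have hs' : s - (N - k) = s + k - N := by omega
    have hk' : k - (N - s) = s + k - N := by omega
    apply Nat.eq_of_mul_eq_mul_right (factorial_pos (s + k - N))
    calc s.choose (N - k) * k ! * (N - k)! * (s + k - N)!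
        = s.choose (N - k) * (N - k)! * (s - (N - k))! * k ! := by rw [hs']; ring
      _ = k.choose (N - s) * (N - s)! * (k - (N - s))! * s ! := by
        rw [choose_mul_factorial_mul_factorial h, choose_mul_factorial_mul_factorial (by omega),
          mul_comm]
      _ = k.choose (N - s) * s ! * (N - s)! * (s + k - N)! := by rw [hk']; ring
  · rw [choose_eq_zero_of_lt (by omega), choose_eq_zero_of_lt (by omega)]
    simp

def kernelDenom (K : Type*) [Ring K] (N j κ₁ κ₂ : ℕ) : K :=
  κ₁ ! * κ₂ ! * (N - j - κ₁)! * (j - κ₂)! * (N - κ₁ - κ₂)! * (κ₁ + κ₂)! *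
    (N - κ₁ + 1)

section

variable {K : Type*} [Field K] [CharZero K]

theorem cast_choose_div_add_one (n k : ℕ) :
    (n.choose k : K) / (k + 1) = (n + 1).choose (k + 1) / (n + 1) := by
  rw [div_eq_div_iff (cast_add_one_ne_zero k) (cast_add_one_ne_zero n)]
  exact_mod_cast (mul_comm _ _).trans (add_one_mul_choose_eq n k)

theorem sum_choose_mul_choose_mul_choose_div {N j : ℕ} (k : ℕ) (hj : j ≤ N) :
    ∑ κ₁ ∈ range (N - j + 1), ∑ κ₂ ∈ range (j + 1),
      ((N - j).choose κ₁ * j.choose κ₂ * k.choose (N - κ₁ - κ₂) : K) /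
        ((N - κ₁ : ℕ) + 1) =
      ((N + k + 1).choose (N + 1) : K) / (j + k + 1) := by
  calc _ = ∑ κ₁ ∈ range (N - j + 1),
          ((N - j).choose κ₁ : K) * ((j + k).choose (N - κ₁) / ((N - κ₁ : ℕ) + 1)) := by
        refine sum_congr rfl fun κ₁ hκ₁ => ?_
        simp_rw [mul_assoc, ← sum_div, ← mul_sum, mul_div_assoc]
        rw [← sum_range_choose_mul_choose_sub k (by grind : j ≤ N - κ₁)]
        push_cast
        rfl
    _ = (∑ κ₁ ∈ range (N - j + 1),
          ((N - j).choose κ₁ * (j + k + 1).choose (N + 1 - κ₁) : ℕ)) / (j + k + 1 : K) := by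
        push_cast
        rw [sum_div]
        refine sum_congr rfl fun κ₁ hκ₁ => ?_
        rw [cast_choose_div_add_one, show N - κ₁ + 1 = N + 1 - κ₁ by grind]
        push_cast
        ring
    _ = _ := by
        rw [sum_range_choose_mul_choose_sub _ (by omega),
          show N - j + (j + k + 1) = N + k + 1 by omega]

theorem choose_div_factorials_eq {N j k κ₁ κ₂ : ℕ} (hj : j ≤ N) (hk : k ≤ N)
    (h₁ : κ₁ ≤ N - j) (h₂ : κ₂ ≤ j) :
    ((κ₁ + κ₂).choose (N - k) : K) /
        (κ₁ ! * κ₂ ! * (N - j - κ₁)! * (j - κ₂)! * (N - κ₁ - κ₂)! * (κ₁ + κ₂)!) =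
      ((N - j).choose κ₁ * j.choose κ₂ * k.choose (N - κ₁ - κ₂)) /
        ((N - j)! * j ! * k ! * (N - k)!) := by
  rw [div_eq_div_iff (by simp [factorial_ne_zero]) (by simp [factorial_ne_zero])]
  have hswap : ((κ₁ + κ₂).choose (N - k) * k ! * (N - k)! : K) =
      k.choose (N - κ₁ - κ₂) * (κ₁ + κ₂)! * (N - κ₁ - κ₂)! := by
    rw [Nat.sub_sub]
    exact_mod_cast choose_sub_mul_factorial_mul_factorial_comm (by omega) hk
  have hκ₁ : ((N - j).choose κ₁ * κ₁ ! * (N - j - κ₁)! : K) = (N - j)! := by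
    exact_mod_cast choose_mul_factorial_mul_factorial h₁
  have hκ₂ : (j.choose κ₂ * κ₂ ! * (j - κ₂)! : K) = j ! := by
    exact_mod_cast choose_mul_factorial_mul_factorial h₂
  rw [← hκ₁, ← hκ₂]
  linear_combination
    ((N - j).choose κ₁ * κ₁ ! * (N - j - κ₁)! * (j.choose κ₂ * κ₂ ! * (j - κ₂)!) : K) * hswap

theorem sum_choose_div_kernelDenom {N j k : ℕ} (hj : j ≤ N) (hk : k ≤ N) :
    ∑ κ₁ ∈ range (N - j + 1), ∑ κ₂ ∈ range (j + 1),
        ((κ₁ + κ₂).choose (N - k) : K) / kernelDenom K N j κ₁ κ₂ =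
      (N + k + 1)! / ((N + 1)! * j ! * (N - j)! * (j + k + 1) * (N - k)! * k ! ^ 2) := by
  calc _ = (∑ κ₁ ∈ range (N - j + 1), ∑ κ₂ ∈ range (j + 1),
          ((N - j).choose κ₁ * j.choose κ₂ * k.choose (N - κ₁ - κ₂) : K) /
            ((N - κ₁ : ℕ) + 1)) / ((N - j)! * j ! * k ! * (N - k)!) := by
        simp_rw [sum_div]
        refine sum_congr rfl fun κ₁ hκ₁ => sum_congr rfl fun κ₂ hκ₂ => ?_
        rw [mem_range, Nat.lt_succ_iff] at hκ₁ hκ₂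
        rw [kernelDenom, div_mul_eq_div_div, choose_div_factorials_eq hj hk hκ₁ hκ₂,
          div_right_comm, Nat.cast_sub (by omega)]
    _ = _ := by
        have hjk : (j + k + 1 : K) ≠ 0 := by exact_mod_cast succ_ne_zero (j + k)
        rw [sum_choose_mul_choose_mul_choose_div k hj,
          cast_choose K (by omega : N + 1 ≤ N + k + 1), show N + k + 1 - (N + 1) = k by omega]
        field_simp

theorem sum_add_pow_mul_pow_div_kernelDenom (x y : K) {N j : ℕ} (hj : j ≤ N) :
    ∑ κ₁ ∈ range (N - j + 1), ∑ κ₂ ∈ range (j + 1),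
        (x + y) ^ (κ₁ + κ₂) * y ^ (N - κ₁ - κ₂) / kernelDenom K N j κ₁ κ₂ =
      ∑ k ∈ range (N + 1), x ^ (N - k) * y ^ k *
        ((N + k + 1)! / ((N + 1)! * j ! * (N - j)! * (j + k + 1) * (N - k)! * k ! ^ 2)) := by
  calc _ = ∑ κ₁ ∈ range (N - j + 1), ∑ κ₂ ∈ range (j + 1), ∑ k ∈ range (N + 1),
          x ^ (N - k) * y ^ k *
            (((κ₁ + κ₂).choose (N - k) : K) / kernelDenom K N j κ₁ κ₂) := by
        refine sum_congr rfl fun κ₁ hκ₁ => sum_congr rfl fun κ₂ hκ₂ => ?_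
        rw [mem_range] at hκ₁ hκ₂
        rw [Nat.sub_sub, add_pow_mul_pow_eq_sum_range x y (by omega), sum_div]
        exact sum_congr rfl fun k _ => by ring
    _ = ∑ k ∈ range (N + 1), x ^ (N - k) * y ^ k *
          ∑ κ₁ ∈ range (N - j + 1), ∑ κ₂ ∈ range (j + 1),
            ((κ₁ + κ₂).choose (N - k) : K) / kernelDenom K N j κ₁ κ₂ := by
        simp_rw [mul_sum]
        exact (sum_congr rfl fun κ₁ _ => sum_comm).trans sum_comm
    _ = _ := sum_congr rfl fun k hk => by
        rw [sum_choose_div_kernelDenom hj (Nat.lt_succ_iff.mp (mem_range.mp hk))]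

end

theorem stmt11 (N j : ℕ) (hj : j ≤ N) (T : ℝ) (hT : 0 < T) (τ : ℝ) :
    (((N + j + 1).factorial : ℝ) * ((N + 1).factorial : ℝ) / T ^ (N + j + 1)) *
        (∑ κ₁ ∈ Finset.range (N - j + 1), ∑ κ₂ ∈ Finset.range (j + 1),
          (T - τ) ^ (κ₁ + κ₂) * (-τ) ^ (N - κ₁ - κ₂) /
            ((κ₁.factorial : ℝ) * κ₂.factorial * (N - j - κ₁).factorial *
              (j - κ₂).factorial * (N - κ₁ - κ₂).factorial * (κ₁ + κ₂).factorial *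
              (N - κ₁ + 1))) =
      (((N + j + 1).factorial : ℝ) / (T ^ (j + 1) * j.factorial * (N - j).factorial)) *
        (∑ k ∈ Finset.range (N + 1),
          ((-1 : ℝ) ^ k * ((N + k + 1).factorial : ℝ) /
              ((j + k + 1) * ((N - k).factorial : ℝ) * (k.factorial : ℝ) ^ 2)) *
            (τ / T) ^ k) := by
  have expand := sum_add_pow_mul_pow_div_kernelDenom T (-τ) hj
  unfold kernelDenom at expand
  rw [sub_eq_add_neg, expand, mul_sum, mul_sum]
  refine sum_congr rfl fun k hk => ?_
  have hT0 : T ≠ 0 := hT.ne'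
  rw [show N + j + 1 = (N - k) + (j + 1) + k by grind, pow_add, pow_add, neg_pow, div_pow]
  field_simp
end

section
/- For T > 0 and 0 ≤ j ≤ N, the kernel G_j(T,·) reproduces derivatives of monomials at T: for every 0 ≤ m ≤ N, ∫₀^T G_j(T,σ)·(T-σ)^m dσ = m!/(m-j)! · T^{m-j} if m ≥ j, and 0 if m < j, where G_j(T,σ) = ((N+j+1)!/(T^{j+1}·j!·(N-j)!))·Σ_{k=0}^{N} ((-1)^k·(N+k+1)!/((j+k+1)·(N-k)!·(k!)²))·(σ/T)^k. -/
/-!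
Integrating termwise with the beta integral
`∫₀ᵀ σᵏ (T - σ)ᵐ dσ = k! m! / (k + m + 1)! · Tᵏ⁺ᵐ⁺¹` reduces the claim to a closed form for the
moments `S m = ∑ₖ cₖ k! / (k + m + 1)!` of the kernel coefficients `cₖ`. At `m = N` the sum is
again a beta integral, `∑ₖ (-1)ᵏ (N choose k) / (k + j + 1) = N! j! / (N + j + 1)!`.
Below `N`, `S m = (m + 1 - j) S (m + 1)`: the difference is an `N`-th finite difference of the
rising factorial `k ↦ (N + k + 1)! / (k + m + 2)!`, a polynomial of degree `N - m - 1 < N`.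
-/

open Finset Nat Polynomial

theorem integral_pow_mul_sub_pow (a b : ℕ) (T : ℝ) :
    ∫ σ in (0 : ℝ)..T, σ ^ a * (T - σ) ^ b = a ! * b ! / (a + b + 1)! * T ^ (a + b + 1) := by
  induction b generalizing a with
  | zero =>
    simp only [pow_zero, mul_one, integral_pow, add_zero]
    rw [zero_pow (by omega), sub_zero, factorial_succ, factorial_zero]
    push_cast
    field_simp
  | succ b ih =>
    have split : ∀ σ : ℝ, σ ^ a * (T - σ) ^ (b + 1) =
        T * (σ ^ a * (T - σ) ^ b) - σ ^ (a + 1) * (T - σ) ^ b := fun σ => by ring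
    simp only [split]
    rw [intervalIntegral.integral_sub ((by fun_prop : Continuous _).intervalIntegrable _ _)
      ((by fun_prop : Continuous _).intervalIntegrable _ _),
      intervalIntegral.integral_const_mul, ih, ih]
    rw [show a + 1 + b + 1 = a + (b + 1) + 1 by ring, factorial_succ (a + (b + 1)),
      show a + (b + 1) = a + b + 1 by ring, factorial_succ a, factorial_succ b]
    push_cast
    field_simp
    ring

theorem sum_neg_one_pow_mul_choose_div (n c : ℕ) :
    ∑ k ∈ range (n + 1), (-1 : ℝ) ^ k * n.choose k / (k + c + 1) =
      n ! * c ! / (n + c + 1)! := by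
  -- both sides are `∫₀¹ σᶜ (1 - σ)ⁿ dσ`
  have expand : ∀ σ : ℝ, σ ^ c * (1 - σ) ^ n =
      ∑ k ∈ range (n + 1), (-1 : ℝ) ^ k * n.choose k * σ ^ (k + c) := fun σ => by
    rw [sub_eq_neg_add, add_pow, mul_sum]
    refine sum_congr rfl fun k _ => ?_
    rw [neg_pow, pow_add]
    ring
  have := integral_pow_mul_sub_pow c n 1
  simp only [expand, one_pow, mul_one] at this
  rw [intervalIntegral.integral_finsetSum fun k _ =>
    (by fun_prop : Continuous _).intervalIntegrable _ _] at this
  simp only [intervalIntegral.integral_const_mul, integral_pow, one_pow, zero_pow (succ_ne_zero _),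
    sub_zero] at this
  rw [mul_comm (n ! : ℝ), add_comm n c, ← this]
  refine sum_congr rfl fun k _ => ?_
  push_cast
  ring

theorem Polynomial.sum_neg_one_pow_mul_choose_mul_eval_eq_zero {R : Type*} [CommRing R]
    {P : R[X]} {n : ℕ} (hP : P.natDegree < n) :
    ∑ k ∈ range (n + 1), (-1 : R) ^ k * n.choose k * P.eval (k : R) = 0 := by
  have h := congr_fun (fwdDiff_iter_eq_zero_of_degree_lt hP) 0
  rw [fwdDiff_iter_eq_sum_shift] at h
  simp only [zero_add, nsmul_eq_mul, mul_one, zsmul_eq_mul, Int.cast_mul, Int.cast_pow,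
    Int.cast_neg, Int.cast_one, Int.cast_natCast, Pi.zero_apply] at h
  have sign : ∀ k ∈ range (n + 1), (-1 : R) ^ k = (-1) ^ n * (-1) ^ (n - k) := fun k hk => by
    rw [← pow_add, show n + (n - k) = k + 2 * (n - k) by grind, pow_add, pow_mul]
    simp
  calc ∑ k ∈ range (n + 1), (-1 : R) ^ k * n.choose k * P.eval (k : R)
      = (-1) ^ n * ∑ k ∈ range (n + 1), (-1) ^ (n - k) * n.choose k * P.eval (k : R) := by
        rw [mul_sum]
        exact sum_congr rfl fun k hk => by rw [sign k hk]; ring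
    _ = 0 := by rw [h, mul_zero]

theorem sum_neg_one_pow_mul_choose_mul_factorial_div_eq_zero {N m : ℕ} (hm : m < N) :
    ∑ k ∈ range (N + 1), (-1 : ℝ) ^ k * N.choose k * ((N + k + 1)! / (k + m + 2)! : ℝ) = 0 := by
  set P : ℝ[X] := (ascPochhammer ℝ (N - m - 1)).comp (X + C ((m + 3 : ℕ) : ℝ))
  have hdeg : P.natDegree < N := by
    rw [natDegree_comp, ascPochhammer_natDegree, natDegree_X_add_C]
    omega
  rw [← sum_neg_one_pow_mul_choose_mul_eval_eq_zero hdeg]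
  refine sum_congr rfl fun k _ => ?_
  have ratio := factorial_mul_ascFactorial (k + m + 2) (N - m - 1)
  rw [show k + m + 2 + (N - m - 1) = N + k + 1 by omega] at ratio
  rw [eval_comp, eval_add, eval_X, eval_C, ← cast_add, show k + (m + 3) = k + m + 2 + 1 by ring,
    ascPochhammer_nat_eq_natCast_ascFactorial, ← ratio, cast_mul,
    mul_div_cancel_left₀ _ (by positivity)]

theorem integral_sum_mul_div_pow_mul_sub_pow (c : ℕ → ℝ) (n m : ℕ) {T : ℝ} (hT : T ≠ 0) :
    ∫ σ in (0 : ℝ)..T, (∑ k ∈ range n, c k * (σ / T) ^ k) * (T - σ) ^ m =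
      T ^ (m + 1) * m ! * ∑ k ∈ range n, c k * k ! / (k + m + 1)! := by
  have regroup : ∀ σ : ℝ, (∑ k ∈ range n, c k * (σ / T) ^ k) * (T - σ) ^ m =
      ∑ k ∈ range n, c k / T ^ k * (σ ^ k * (T - σ) ^ m) := fun σ => by
    rw [sum_mul]
    exact sum_congr rfl fun k _ => by rw [div_pow]; ring
  simp only [regroup]
  rw [intervalIntegral.integral_finsetSum fun k _ =>
    (by fun_prop : Continuous _).intervalIntegrable _ _, mul_sum]
  refine sum_congr rfl fun k _ => ?_
  rw [intervalIntegral.integral_const_mul, integral_pow_mul_sub_pow, pow_add, pow_add]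
  field_simp
  ring

noncomputable def kernelCoeff (N j k : ℕ) : ℝ :=
  (-1) ^ k * (N + k + 1)! / ((j + k + 1) * (N - k)! * k ! ^ 2)

/-- Equals `∫₀¹ (∑ₖ kernelCoeff N j k * sᵏ) (1 - s)ᵐ ds / m!`. -/
noncomputable def kernelMoment (N j m : ℕ) : ℝ :=
  ∑ k ∈ range (N + 1), kernelCoeff N j k * k ! / (k + m + 1)!

theorem kernelMoment_self (N j : ℕ) : kernelMoment N j N = j ! / (N + j + 1)! := by
  have hN : (N ! : ℝ) ≠ 0 := by positivity
  have termwise : ∀ k ∈ range (N + 1), kernelCoeff N j k * k ! / (k + N + 1)! =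
      (-1 : ℝ) ^ k * N.choose k / (k + j + 1) / N ! := fun k hk => by
    rw [cast_choose ℝ (by grind : k ≤ N), kernelCoeff, show k + N + 1 = N + k + 1 by ring]
    field_simp
    ring
  rw [kernelMoment, sum_congr rfl termwise, ← sum_div, sum_neg_one_pow_mul_choose_div]
  field_simp

theorem kernelMoment_eq_mul_succ (N j : ℕ) {m : ℕ} (hm : m < N) :
    kernelMoment N j m = (m + 1 - j) * kernelMoment N j (m + 1) := by
  have termwise : ∀ k ∈ range (N + 1), kernelCoeff N j k * k ! / (k + m + 1)! -
      (m + 1 - j) * (kernelCoeff N j k * k ! / (k + (m + 1) + 1)!) =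
      (-1 : ℝ) ^ k * N.choose k * ((N + k + 1)! / (k + m + 2)! : ℝ) / N ! := fun k hk => by
    rw [cast_choose ℝ (by grind : k ≤ N), kernelCoeff, show k + (m + 1) + 1 = k + m + 2 by ring,
      show k + m + 2 = k + m + 1 + 1 by ring, factorial_succ (k + m + 1)]
    push_cast
    field_simp
    ring
  rw [← sub_eq_zero, kernelMoment, kernelMoment, mul_sum, ← sum_sub_distrib, sum_congr rfl termwise,
    ← sum_div, sum_neg_one_pow_mul_choose_mul_factorial_div_eq_zero hm, zero_div]

theorem sub_mul_descFactorial_succ (n k : ℕ) :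
    ((n + 1 : ℝ) - k) * (n + 1).descFactorial k = (n + 1) * n.descFactorial k := by
  by_cases hk : k ≤ n + 1
  · have := congrArg (Nat.cast (R := ℝ)) (succ_descFactorial n k)
    push_cast [Nat.cast_sub hk] at this
    exact this
  · rw [descFactorial_eq_zero_iff_lt.mpr (by omega), descFactorial_eq_zero_iff_lt.mpr (by omega)]
    simp

theorem kernelMoment_eq {N j m : ℕ} (hj : j ≤ N) (hm : m ≤ N) :
    kernelMoment N j m = j ! * (N - j)! / (N + j + 1)! * (m.descFactorial j / m !) := by
  induction hm using Nat.decreasingInduction with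
  | self =>
    have hdesc : (N.descFactorial j : ℝ) ≠ 0 := by
      exact_mod_cast (descFactorial_pos.mpr hj).ne'
    rw [kernelMoment_self, ← factorial_mul_descFactorial hj]
    push_cast
    field_simp
  | of_succ m hm ih =>
    rw [kernelMoment_eq_mul_succ N j hm, ih, factorial_succ m]
    have := sub_mul_descFactorial_succ m j
    push_cast
    field_simp
    linear_combination this

theorem stmt13 (N j m : ℕ) (hj : j ≤ N) (hm : m ≤ N) (T : ℝ) (hT : 0 < T) :
    ∫ σ in (0:ℝ)..T,
        (((N + j + 1).factorial : ℝ) / (T ^ (j + 1) * j.factorial * (N - j).factorial)) *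
          (∑ k ∈ Finset.range (N + 1),
            ((-1 : ℝ) ^ k * ((N + k + 1).factorial : ℝ) /
                ((j + k + 1) * ((N - k).factorial : ℝ) * (k.factorial : ℝ) ^ 2)) *
              (σ / T) ^ k) * (T - σ) ^ m =
      if j ≤ m then (m.factorial : ℝ) / (m - j).factorial * T ^ (m - j) else 0 := by
  change ∫ σ in (0:ℝ)..T, _ * (∑ k ∈ range (N + 1), kernelCoeff N j k * (σ / T) ^ k) *
    (T - σ) ^ m = _
  simp only [mul_assoc]
  rw [intervalIntegral.integral_const_mul,
    integral_sum_mul_div_pow_mul_sub_pow (kernelCoeff N j) (N + 1) m hT.ne',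
    ← kernelMoment, kernelMoment_eq hj hm]
  split_ifs with hjm
  · rw [← factorial_mul_descFactorial hjm, show m + 1 = (m - j) + (j + 1) by omega,
      pow_add T (m - j)]
    push_cast
    field_simp
  · rw [descFactorial_eq_zero_iff_lt.mpr (by omega)]
    simp
end

section
/- For natural numbers i, j ≥ 1 and N with i, j ≤ N+1, the following binomial identity holds: Σ_{k=1}^{N+1} (1/(i+k-1)) · (-1)^{k+j} · (k+j-1) · C(N+k, N+1-j) · C(N+j, N+1-k) · C(k+j-2, k-1)² = δ_{ij} (Kronecker delta), i.e., the Hilbert matrix times the claimed inverse is the identity. -/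
/-!
The Hilbert matrix `1 / (i + k - 1)` is the Cauchy matrix `(x i - y k)⁻¹` with nodes `x i = i`
and `y k = 1 - k`. Any Cauchy matrix is inverted by Lagrange interpolation: the basis polynomial
`ℓ j` of the nodes `x` has degree `< n`, so the barycentric formula on the nodes `y`, evaluated
at `x i`, reads `δ i j = ω(x i) * ∑ k, w k * ℓ j (y k) / (x i - y k)`, where `ω` is the nodal
polynomial and `w` are the nodal weights of `y`. For the Hilbert nodes, `ω(x j)`, `w k` and
`ℓ j (y k)` are signed ratios of factorials, whose product is the binomial expression.
-/

open Finset Polynomial Lagrange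

section CauchyMatrix

variable {F ι : Type*} [Field F] [DecidableEq ι] {s : Finset ι} {x y : ι → F}

theorem eval_eq_eval_nodal_mul_sum_nodalWeight {f : F[X]} (hy : Set.InjOn y s)
    (hf : f.degree < #s) {t : F} (ht : ∀ k ∈ s, t ≠ y k) :
    f.eval t =
      (nodal s y).eval t * ∑ k ∈ s, nodalWeight s y k * (t - y k)⁻¹ * f.eval (y k) := by
  conv_lhs => rw [eq_interpolate hy hf]
  exact eval_interpolate_not_at_node _ ht

noncomputable def cauchyInv (s : Finset ι) (x y : ι → F) (k j : ι) : F :=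
  (nodal s y).eval (x j) * nodalWeight s y k * (Lagrange.basis s x j).eval (y k)

theorem sum_inv_sub_mul_cauchyInv (hx : Set.InjOn x s) (hy : Set.InjOn y s)
    (hxy : ∀ i ∈ s, ∀ k ∈ s, x i ≠ y k) {i j : ι} (hi : i ∈ s) (hj : j ∈ s) :
    ∑ k ∈ s, (x i - y k)⁻¹ * cauchyInv s x y k j = if i = j then 1 else 0 := by
  have hdeg : (Lagrange.basis s x j).degree < #s := by
    rw [degree_basis hx hj]
    exact_mod_cast Nat.sub_lt (card_pos.mpr ⟨j, hj⟩) one_pos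
  have hbary := eval_eq_eval_nodal_mul_sum_nodalWeight hy hdeg (hxy i hi)
  have hsum : ∑ k ∈ s, (x i - y k)⁻¹ * cauchyInv s x y k j =
      (nodal s y).eval (x j) *
        ∑ k ∈ s, nodalWeight s y k * (x i - y k)⁻¹ * (Lagrange.basis s x j).eval (y k) := by
    rw [mul_sum]
    exact sum_congr rfl fun k _ => by unfold cauchyInv; ring
  rw [hsum]
  split_ifs with hij
  · subst hij
    rw [← hbary, eval_basis_self hx hi]
  · rw [eval_basis_of_ne (Ne.symm hij) hi, eq_comm, mul_eq_zero] at hbary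
    rw [hbary.resolve_left (eval_nodal_not_at_node (hxy i hi)), mul_zero]

end CauchyMatrix

open Nat

theorem prod_Ico_one_cast_sub (k : ℕ) :
    ∏ m ∈ Ico 1 k, ((m : ℝ) - k) = (-1) ^ (k - 1) * (k - 1)! := by
  rcases k with _ | k
  · simp
  have hrefl : ∏ m ∈ Ico 1 (k + 1), ((m : ℝ) - (k + 1 : ℕ)) =
      ∏ m ∈ Ico 1 (k + 1), -(((k + 1 - m : ℕ) : ℝ)) :=
    prod_congr rfl fun m hm => by
      rw [Nat.cast_sub (mem_Ico.mp hm).2.le]; ring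
  rw [hrefl, prod_Ico_reflect (fun t => -(t : ℝ)) 1 (Nat.le_succ _),
    show k + 1 + 1 - (k + 1) = 1 by omega, prod_neg, card_Ico, ← Nat.cast_prod,
    Nat.add_sub_cancel, prod_Ico_id_eq_factorial]
  simp

theorem prod_Ioc_cast_sub (k n : ℕ) : ∏ m ∈ Ioc k n, ((m : ℝ) - k) = (n - k)! := by
  induction n with
  | zero => simp
  | succ n ih =>
    rcases le_or_gt k n with hkn | hnk
    · rw [prod_Ioc_succ_top hkn, ih, Nat.sub_add_comm hkn, Nat.factorial_succ]
      push_cast [Nat.cast_sub hkn]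
      ring
    · rw [Ioc_eq_empty (by omega), Nat.sub_eq_zero_of_le hnk]
      simp

theorem prod_erase_Icc_cast_sub {k n : ℕ} (hk : 1 ≤ k) (hkn : k ≤ n) :
    ∏ m ∈ (Icc 1 n).erase k, ((m : ℝ) - k) = (-1) ^ (k - 1) * (k - 1)! * (n - k)! := by
  have hsplit : (Icc 1 n).erase k = Ico 1 k ∪ Ioc k n := by
    ext m; simp only [mem_erase, mem_Icc, mem_union, mem_Ico, mem_Ioc]; omega
  rw [hsplit, prod_union (disjoint_left.mpr fun m h h' => by
      simp only [mem_Ico, mem_Ioc] at h h'; omega),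
    prod_Ico_one_cast_sub, prod_Ioc_cast_sub]

theorem factorial_mul_prod_Icc_cast_add (a n : ℕ) :
    (a ! : ℝ) * ∏ m ∈ Icc 1 n, ((a : ℝ) + m) = (a + n)! := by
  induction n with
  | zero => simp
  | succ n ih =>
    rw [prod_Icc_succ_top (by omega), ← mul_assoc, ih, ← add_assoc, factorial_succ]
    push_cast
    ring

theorem eval_nodal_one_sub_cast (n j : ℕ) :
    (nodal (Icc 1 n) fun m => 1 - (m : ℝ)).eval ((j + 1 : ℕ) : ℝ) = (n + j)! / j ! := by
  rw [eval_nodal, eq_div_iff (by positivity), mul_comm, add_comm n j,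
    ← factorial_mul_prod_Icc_cast_add]
  congr 1
  exact prod_congr rfl fun m _ => by push_cast; ring

theorem nodalWeight_one_sub_cast {n k : ℕ} (hk : k < n) :
    nodalWeight (Icc 1 n) (fun m => 1 - (m : ℝ)) (k + 1) =
      ((-1) ^ k * k ! * (n - (k + 1))! : ℝ)⁻¹ := by
  have h := prod_erase_Icc_cast_sub (Nat.le_add_left 1 k) hk
  rw [Nat.add_sub_cancel] at h
  rw [nodalWeight, prod_inv_distrib, ← h]
  exact congrArg _ (prod_congr rfl fun m _ => by push_cast; ring)

theorem eval_basis_cast_one_sub_cast {N j k : ℕ} (hj : j ≤ N) :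
    (Lagrange.basis (Icc 1 (N + 1)) (fun m => (m : ℝ)) (j + 1)).eval (1 - ((k + 1 : ℕ) : ℝ)) =
      (N + k + 1)! / ((-1) ^ j * k ! * j ! * (N - j)! * (k + j + 1)) := by
  have hjS : j + 1 ∈ Icc 1 (N + 1) := mem_Icc.mpr ⟨Nat.le_add_left 1 j, by omega⟩
  have hcard : #((Icc 1 (N + 1)).erase (j + 1)) = N := by
    rw [card_erase_of_mem hjS, Nat.card_Icc]; rfl
  have hnodes := prod_erase_Icc_cast_sub (Nat.le_add_left 1 j) (by omega : j + 1 ≤ N + 1)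
  rw [Nat.add_sub_cancel, Nat.add_sub_add_right] at hnodes
  have hden : ∏ m ∈ (Icc 1 (N + 1)).erase (j + 1), (((j + 1 : ℕ) : ℝ) - m) =
      (-1) ^ N * ((-1) ^ j * j ! * (N - j)!) := by
    calc _ = ∏ m ∈ (Icc 1 (N + 1)).erase (j + 1), -((m : ℝ) - (j + 1 : ℕ)) :=
          prod_congr rfl fun m _ => by ring
      _ = _ := by rw [prod_neg, hcard, hnodes]
  have hnum : ∏ m ∈ (Icc 1 (N + 1)).erase (j + 1), ((1 - ((k + 1 : ℕ) : ℝ)) - m) =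
      (-1) ^ N * ∏ m ∈ (Icc 1 (N + 1)).erase (j + 1), ((k : ℝ) + m) := by
    calc _ = ∏ m ∈ (Icc 1 (N + 1)).erase (j + 1), -((k : ℝ) + m) :=
          prod_congr rfl fun m _ => by push_cast; ring
      _ = _ := by rw [prod_neg, hcard]
  have hfull := factorial_mul_prod_Icc_cast_add k (N + 1)
  rw [← prod_erase_mul _ _ hjS] at hfull
  simp only [Lagrange.basis, basisDivisor, eval_prod, eval_mul, eval_C, eval_sub, eval_X]
  rw [prod_mul_distrib, prod_inv_distrib, hden, hnum, eq_div_iff (by positivity),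
    show N + k + 1 = k + (N + 1) by omega, ← hfull]
  push_cast
  field_simp
  ring

theorem hilbertInv_entry_eq_cauchyInv {N j k : ℕ} (hj : j ∈ Icc 1 (N + 1))
    (hk : k ∈ Icc 1 (N + 1)) :
    (-1 : ℝ) ^ (k + j) * ((k : ℝ) + j - 1) * (Nat.choose (N + k) (N + 1 - j)) *
        (Nat.choose (N + j) (N + 1 - k)) * (Nat.choose (k + j - 2) (k - 1)) ^ 2 =
      cauchyInv (Icc 1 (N + 1)) (fun m => (m : ℝ)) (fun m => 1 - (m : ℝ)) k j := by
  obtain ⟨j, rfl⟩ : ∃ j', j = j' + 1 := ⟨j - 1, by simp at hj; omega⟩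
  obtain ⟨k, rfl⟩ : ∃ k', k = k' + 1 := ⟨k - 1, by simp at hk; omega⟩
  have hjN : j ≤ N := by simp at hj; omega
  have hkN : k ≤ N := by simp at hk; omega
  have hchoose₁ : (Nat.choose (N + (k + 1)) (N + 1 - (j + 1)) : ℝ) =
      (N + k + 1)! / ((N - j)! * (k + j + 1)!) := by
    rw [Nat.cast_choose ℝ (by omega), show N + (k + 1) - (N + 1 - (j + 1)) = k + j + 1 by omega,
      Nat.add_sub_add_right, ← add_assoc]
  have hchoose₂ : (Nat.choose (N + (j + 1)) (N + 1 - (k + 1)) : ℝ) =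
      (N + j + 1)! / ((N - k)! * (k + j + 1)!) := by
    rw [Nat.cast_choose ℝ (by omega), show N + (j + 1) - (N + 1 - (k + 1)) = k + j + 1 by omega,
      Nat.add_sub_add_right, ← add_assoc]
  have hchoose₃ :
      (Nat.choose (k + 1 + (j + 1) - 2) (k + 1 - 1) : ℝ) = (k + j)! / (k ! * j !) := by
    rw [show k + 1 + (j + 1) - 2 = k + j by omega, Nat.add_sub_cancel,
      Nat.cast_choose ℝ (Nat.le_add_right k j), Nat.add_sub_cancel_left]
  rw [cauchyInv, eval_nodal_one_sub_cast, nodalWeight_one_sub_cast (by omega),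
    eval_basis_cast_one_sub_cast hjN, hchoose₁, hchoose₂, hchoose₃, factorial_succ (k + j),
    Nat.add_sub_add_right, add_right_comm N 1 j]
  simp only [div_eq_mul_inv, mul_inv, ← inv_pow, inv_neg_one]
  push_cast
  field_simp
  ring

theorem stmt16 (N i j : ℕ) (hi1 : 1 ≤ i) (hiN : i ≤ N + 1) (hj1 : 1 ≤ j) (hjN : j ≤ N + 1) :
    ∑ k ∈ Finset.Icc 1 (N + 1),
        (1 / ((i : ℝ) + k - 1)) * (-1 : ℝ) ^ (k + j) * ((k : ℝ) + j - 1) *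
          (Nat.choose (N + k) (N + 1 - j)) * (Nat.choose (N + j) (N + 1 - k)) *
          (Nat.choose (k + j - 2) (k - 1)) ^ 2 =
      if i = j then 1 else 0 := by
  have hj : j ∈ Icc 1 (N + 1) := mem_Icc.mpr ⟨hj1, hjN⟩
  have hnodes : ∀ a ∈ Icc 1 (N + 1), ∀ b ∈ Icc 1 (N + 1), (a : ℝ) ≠ 1 - b := by
    intro a ha b hb hab
    have : ((a + b : ℕ) : ℝ) = 1 := by push_cast; linarith
    norm_cast at this
    simp only [mem_Icc] at ha hb
    omega
  calc _ = ∑ k ∈ Icc 1 (N + 1), ((i : ℝ) - (1 - k))⁻¹ *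
        cauchyInv (Icc 1 (N + 1)) (fun m => (m : ℝ)) (fun m => 1 - (m : ℝ)) k j :=
        sum_congr rfl fun k hk => by rw [← hilbertInv_entry_eq_cauchyInv hj hk]; ring
    _ = _ := sum_inv_sub_mul_cauchyInv Nat.cast_injective.injOn
        (fun a _ b _ h => by simpa using h) hnodes (mem_Icc.mpr ⟨hi1, hiN⟩) hj
end

section
/- For T > 0 and 0 ≤ j ≤ N, the kernel G_j satisfies the moment conditions ∫₀^T G_j(T,σ)·σ^k dσ = (-1)^j · j! · δ_{jk} for all 0 ≤ k ≤ N, where δ is the Kronecker delta and G_j(T,σ) = ((N+j+1)!/(T^{j+1}·j!·(N-j)!))·Σ_{m=0}^{N} ((-1)^m·(N+m+1)!/((j+m+1)·(N-m)!·(m!)²))·(σ/T)^m. -/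
/-!
After the substitution `σ = T s` the moment reduces to the finite sum `∑ m, a_m / (m + k + 1)`
with `a_m = (-1)^m (N + m + 1)! / ((j + m + 1) (N - m)! (m!)^2)`. Since
`(N + m + 1)! / m! = (m + k + 1) q(m)` with `q(x) = ∏_{i ≤ N, i ≠ k} (x + i + 1)` of degree `N`,
this sum is, up to `1 / N!`, the sum `∑ m, (-1)^m (N choose m) q(m) / (j + 1 + m)`. For
`deg q ≤ N` the partial fraction identity
`∑ m, (-1)^m (N choose m) q(m) / (x + m) = N! q(-x) / ∏_{i ≤ N} (x + i)` holds, because the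
`N`-th forward difference annihilates the polynomial part of `q(m) / (x + m)`. Finally
`q(-(j + 1)) = ∏_{i ≠ k} (i - j)` vanishes unless `j = k`.
-/

open Polynomial Finset fwdDiff

theorem sum_range_neg_one_pow_mul_choose_mul_eq_fwdDiff_iter {M R : Type*} [AddCommMonoid M]
    [CommRing R] (f : M → R) (h : M) (n : ℕ) :
    ∑ m ∈ range (n + 1), (-1 : R) ^ m * n.choose m * f (m • h) =
      (-1) ^ n * (Δ_[h])^[n] f 0 := by
  rw [fwdDiff_iter_eq_sum_shift, mul_sum]
  refine sum_congr rfl fun m hm => ?_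
  have hsign : (-1 : R) ^ n = (-1) ^ (n - m) * (-1) ^ m := by
    rw [← pow_add, Nat.sub_add_cancel (Nat.lt_succ_iff.mp (mem_range.mp hm))]
  rw [zero_add, zsmul_eq_mul, hsign]
  push_cast
  have hsq : ((-1 : R) ^ (n - m)) ^ 2 = 1 := by rw [← pow_mul, mul_comm, pow_mul]; simp
  linear_combination (-(-1 : R) ^ m * n.choose m * f (m • h)) * hsq

theorem Polynomial.sum_range_neg_one_pow_mul_choose_mul_eval_eq_zero {R : Type*} [CommRing R]
    {p : R[X]} {n : ℕ} (hp : p.degree < n) :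
    ∑ m ∈ range (n + 1), (-1 : R) ^ m * n.choose m * p.eval (m : R) = 0 := by
  rcases eq_or_ne p 0 with rfl | hp0
  · simp
  have := sum_range_neg_one_pow_mul_choose_mul_eq_fwdDiff_iter p.eval 1 n
  simp only [nsmul_one] at this
  rw [this, fwdDiff_iter_eq_zero_of_degree_lt ((natDegree_lt_iff_degree_lt hp0).mpr hp)]
  simp

theorem fwdDiff_iter_inv_add {K : Type*} [Field K] {x : K} (hx : ∀ i : ℕ, x + i ≠ 0)
    (n : ℕ) :
    (Δ_[1])^[n] (fun y : ℕ => (x + y)⁻¹) =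
      fun y : ℕ => (-1) ^ n * n.factorial / ∏ i ∈ range (n + 1), (x + y + i) := by
  have hx' (y i : ℕ) : x + y + i ≠ 0 := by simpa [add_assoc] using hx (y + i)
  induction n with
  | zero => simp
  | succ n ih =>
    ext y
    have hprod (m z : ℕ) : ∏ i ∈ range m, (x + z + i) ≠ 0 :=
      prod_ne_zero_iff.mpr fun i _ => hx' z i
    have hshift : (∏ i ∈ range (n + 1), (x + (y + 1 : ℕ) + i)) * (x + y) =
        (∏ i ∈ range (n + 1), (x + y + i)) * (x + y + (n + 1 : ℕ)) := by
      rw [← prod_range_succ (fun i : ℕ => x + y + i),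
        prod_range_succ' (fun i : ℕ => x + y + i)]
      push_cast
      ring_nf
    rw [Function.iterate_succ_apply', ih, fwdDiff, div_sub_div _ _ (hprod _ _) (hprod _ _),
      div_eq_div_iff (mul_ne_zero (hprod _ _) (hprod _ _)) (hprod _ _),
        prod_range_succ (fun i : ℕ => x + y + i) (n + 1), Nat.factorial_succ]
    push_cast at hshift ⊢
    linear_combination (-(-1 : K) ^ n * n.factorial * ∏ i ∈ range (n + 1), (x + y + i)) * hshift

theorem sum_range_neg_one_pow_mul_choose_div_add {K : Type*} [Field K] {x : K}
    (hx : ∀ i : ℕ, x + i ≠ 0) (n : ℕ) :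
    ∑ m ∈ range (n + 1), (-1 : K) ^ m * n.choose m / (x + m) =
      n.factorial / ∏ i ∈ range (n + 1), (x + i) := by
  have h := sum_range_neg_one_pow_mul_choose_mul_eq_fwdDiff_iter (fun y : ℕ => (x + y)⁻¹) 1 n
  rw [fwdDiff_iter_inv_add hx] at h
  simpa only [smul_eq_mul, mul_one, Nat.cast_zero, add_zero, ← mul_div_assoc, ← mul_assoc,
    ← pow_add, ← two_mul, pow_mul, neg_one_sq, one_pow, one_mul, ← div_eq_mul_inv] using h

theorem Polynomial.sum_range_neg_one_pow_mul_choose_mul_eval_div_add {K : Type*} [Field K]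
    {x : K} (hx : ∀ i : ℕ, x + i ≠ 0) {q : K[X]} {n : ℕ} (hq : q.degree ≤ n) :
    ∑ m ∈ range (n + 1), (-1 : K) ^ m * n.choose m * q.eval (m : K) / (x + m) =
      q.eval (-x) * n.factorial / ∏ i ∈ range (n + 1), (x + i) := by
  set s := q /ₘ (X - C (-x))
  have hs : s.degree < n := by
    rcases eq_or_ne q 0 with rfl | hq0
    · simp [s]
    exact (degree_divByMonic_lt q _ hq0 (by simp)).trans_le hq
  have heval (m : ℕ) : q.eval (m : K) = q.eval (-x) + (x + m) * s.eval (m : K) := by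
    conv_lhs => rw [← modByMonic_add_div q (X - C (-x)), modByMonic_X_sub_C_eq_C_eval]
    simp only [eval_add, eval_C, eval_mul, eval_sub, eval_X]
    ring
  have hterm (m : ℕ) : (-1 : K) ^ m * n.choose m * q.eval (m : K) / (x + m) =
      q.eval (-x) * ((-1 : K) ^ m * n.choose m / (x + m)) +
        (-1 : K) ^ m * n.choose m * s.eval (m : K) := by
    rw [heval]
    field_simp [hx m]
  rw [sum_congr rfl fun m _ => hterm m, sum_add_distrib, ← mul_sum,
    sum_range_neg_one_pow_mul_choose_div_add hx,
    sum_range_neg_one_pow_mul_choose_mul_eval_eq_zero hs, add_zero, mul_div_assoc]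

theorem factorial_mul_prod_range_add_one_add {R : Type*} [CommSemiring R] (a b : ℕ) :
    (a.factorial : R) * ∏ i ∈ range b, ((a : R) + 1 + i) = (a + b).factorial := by
  rw [← Nat.factorial_mul_ascFactorial, Nat.ascFactorial_eq_prod_range]
  push_cast
  rfl

theorem prod_range_sub_self {R : Type*} [CommRing R] (j : ℕ) :
    ∏ i ∈ range j, ((i : R) - j) = (-1) ^ j * j.factorial := by
  simp_rw [← neg_sub (j : R), prod_neg, card_range, ← descPochhammer_eval_eq_prod_range,
    descPochhammer_eval_eq_descFactorial, Nat.descFactorial_self]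

theorem prod_erase_range_sub_self {R : Type*} [CommRing R] {j N : ℕ} (hj : j ≤ N) :
    ∏ i ∈ (range (N + 1)).erase j, ((i : R) - j) =
      (-1) ^ j * j.factorial * (N - j).factorial := by
  induction N, hj using Nat.le_induction with
  | base =>
    rw [range_add_one, erase_insert notMem_range_self, prod_range_sub_self, Nat.sub_self,
      Nat.factorial_zero, Nat.cast_one, mul_one]
  | succ N hjN ih =>
    rw [range_add_one, erase_insert_of_ne (by omega), prod_insert (by simp), ih,
      Nat.succ_sub hjN, Nat.factorial_succ]
    push_cast [Nat.cast_sub hjN]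
    ring

theorem sum_kernel_coeff_div_eq_ite {K : Type*} [Field K] [CharZero K] {N j k : ℕ} (hj : j ≤ N)
    (hk : k ≤ N) :
    ∑ m ∈ range (N + 1), (-1 : K) ^ m * (N + m + 1).factorial /
        ((j + m + 1) * (N - m).factorial * m.factorial ^ 2) / (m + k + 1) =
      if j = k then (-1 : K) ^ j * j.factorial ^ 2 * (N - j).factorial / (N + j + 1).factorial
      else 0 := by
  have hcast (a b : ℕ) : (a : K) + b + 1 ≠ 0 := by exact_mod_cast (a + b).succ_ne_zero
  have hx (i : ℕ) : (j : K) + 1 + i ≠ 0 := by rw [add_right_comm]; exact hcast j i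
  have hkN : k ∈ range (N + 1) := mem_range.mpr (Nat.lt_succ_of_le hk)
  set q : K[X] := ∏ i ∈ (range (N + 1)).erase k, (X + C ((i : K) + 1))
  have hq : q.degree ≤ N := by
    refine degree_le_of_natDegree_le ((natDegree_prod_le _ _).trans ?_)
    rw [sum_congr rfl fun i _ => natDegree_X_add_C _]
    simp [card_erase_of_mem hkN]
  have hqm (m : ℕ) :
      (m.factorial : K) * ((m + k + 1) * q.eval (m : K)) = (N + m + 1).factorial := by
    have hprod := mul_prod_erase (range (N + 1)) (fun i : ℕ => (m : K) + 1 + i) hkN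
    rw [show N + m + 1 = m + (N + 1) by ring, ← factorial_mul_prod_range_add_one_add, ← hprod,
      eval_prod]
    simp only [eval_add, eval_X, eval_C]
    rw [prod_congr rfl fun (i : ℕ) _ => show (m : K) + (i + 1) = m + 1 + i by ring]
    ring
  have hqj : q.eval (-((j : K) + 1)) =
      if j = k then (-1 : K) ^ j * j.factorial * (N - j).factorial else 0 := by
    rw [eval_prod]
    simp only [eval_add, eval_X, eval_C]
    rw [prod_congr rfl fun (i : ℕ) _ => show -((j : K) + 1) + (i + 1) = i - j by ring]
    split_ifs with hjk
    · subst hjk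
      exact prod_erase_range_sub_self hj
    · exact prod_eq_zero (mem_erase.mpr ⟨hjk, mem_range.mpr (Nat.lt_succ_of_le hj)⟩)
        (sub_self _)
  have hterm (m : ℕ) (hm : m ∈ range (N + 1)) : (-1 : K) ^ m * (N + m + 1).factorial /
        ((j + m + 1) * (N - m).factorial * m.factorial ^ 2) / (m + k + 1) =
      (N.factorial : K)⁻¹ * ((-1) ^ m * N.choose m * q.eval (m : K) / ((j : K) + 1 + m)) := by
    rw [← hqm, Nat.cast_choose K (Nat.lt_succ_iff.mp (mem_range.mp hm))]
    field_simp [hcast m k, hcast j m, hx m, Nat.cast_ne_zero.mpr (Nat.factorial_ne_zero N)]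
    ring
  rw [sum_congr rfl hterm, ← mul_sum, sum_range_neg_one_pow_mul_choose_mul_eval_div_add hx hq,
    hqj]
  have hfac := factorial_mul_prod_range_add_one_add (R := K) j (N + 1)
  split_ifs with hjk
  · rw [show N + j + 1 = j + (N + 1) by ring, ← hfac]
    field_simp [prod_ne_zero_iff.mpr fun i _ => hx i,
      Nat.cast_ne_zero.mpr (Nat.factorial_ne_zero N)]
  · simp

theorem integral_sum_mul_div_pow_mul_pow (s : Finset ℕ) (c : ℕ → ℝ) (k : ℕ) (T : ℝ) :
    ∫ σ in (0 : ℝ)..T, (∑ m ∈ s, c m * (σ / T) ^ m) * σ ^ k =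
      T ^ (k + 1) * ∑ m ∈ s, c m / (m + k + 1) := by
  rcases eq_or_ne T 0 with rfl | hT
  · simp
  have hexpand (σ : ℝ) : (∑ m ∈ s, c m * (σ / T) ^ m) * σ ^ k =
      ∑ m ∈ s, c m / T ^ m * σ ^ (m + k) := by
    rw [sum_mul]
    refine sum_congr rfl fun m _ => ?_
    rw [div_pow, pow_add]
    ring
  simp_rw [hexpand]
  rw [intervalIntegral.integral_finsetSum
    fun m _ => (by fun_prop : Continuous _).intervalIntegrable _ _, mul_sum]
  refine sum_congr rfl fun m _ => ?_
  rw [intervalIntegral.integral_const_mul, integral_pow]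
  field_simp
  push_cast
  ring

theorem stmt19 (N j k : ℕ) (hj : j ≤ N) (hk : k ≤ N) (T : ℝ) (hT : 0 < T) :
    ∫ σ in (0:ℝ)..T,
        (((N + j + 1).factorial : ℝ) / (T ^ (j + 1) * j.factorial * (N - j).factorial)) *
          (∑ m ∈ Finset.range (N + 1),
            ((-1 : ℝ) ^ m * ((N + m + 1).factorial : ℝ) /
                ((j + m + 1) * ((N - m).factorial : ℝ) * (m.factorial : ℝ) ^ 2)) *
              (σ / T) ^ m) * σ ^ k =
      (-1 : ℝ) ^ j * j.factorial * (if j = k then 1 else 0) := by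
  simp only [mul_assoc _ (Finset.sum _ _), intervalIntegral.integral_const_mul,
    integral_sum_mul_div_pow_mul_pow, sum_kernel_coeff_div_eq_ite hj hk]
  split_ifs with hjk
  · subst hjk
    field_simp [hT.ne']
  · simp
end
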